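/- arXiv:2602.00264 — 5 statements merged into one kernel-verified Lean document; each statement's English description precedes it below -/
import Mathlib

section
/- For all integers k ≥ 2, all integers l with 1 ≤ l < k, and all real a ≥ 1, the inequality C(k,l) · Γ(al+1) · Γ(a(k-l)+1) / Γ(ak+1) ≤ 2·√a holds, where C(k,l) is the binomial coefficient and Γ is the Gamma function. -/
/-!
By the Beta integral, `Γ(al+1) Γ(a(k-l)+1) / Γ(ak+1) = (ak+1) ∫₀¹ g(t)^a` with
`g(t) = t^l (1-t)^(k-l)`. On `[0,1]` the binomial expansion of `(t + (1-t))^k` gives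
`C(k,l) g ≤ 1`, so `g^a ≤ C(k,l)^(1-a) g`, while `∫₀¹ g = 1 / ((k+1) C(k,l))`. Hence the left side
is at most `(ak+1)/(k+1) · C(k,l)^(1-a) ≤ a 2^(1-a) ≤ 2 √a`, as `C(k,l) ≥ 2`.
-/

open Real Set intervalIntegral

namespace Real

theorem rpow_le_rpow_sub_one_mul {u c a : ℝ} (hu : 0 ≤ u) (huc : u ≤ c) (ha : 1 ≤ a) :
    u ^ a ≤ c ^ (a - 1) * u := by
  calc u ^ a = u ^ (a - 1) * u := by
        rw [← rpow_add_one' hu (by linarith), sub_add_cancel]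
    _ ≤ c ^ (a - 1) * u := by gcongr

theorem Gamma_mul_Gamma_eq_integral {x y : ℝ} (hx : 0 < x) (hy : 0 < y) :
    Gamma x * Gamma y =
      Gamma (x + y) * ∫ t in (0 : ℝ)..1, t ^ (x - 1) * (1 - t) ^ (y - 1) := by
  have h := Complex.Gamma_mul_Gamma_eq_betaIntegral (s := x) (t := y) (by simpa) (by simpa)
  have hbeta : Complex.betaIntegral x y =
      ((∫ t in (0 : ℝ)..1, t ^ (x - 1) * (1 - t) ^ (y - 1) : ℝ) : ℂ) := by
    rw [Complex.betaIntegral, ← intervalIntegral.integral_ofReal]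
    refine intervalIntegral.integral_congr fun t ht => ?_
    rw [uIcc_of_le zero_le_one] at ht
    simp only [Complex.ofReal_mul, ← Complex.ofReal_one, ← Complex.ofReal_sub,
      Complex.ofReal_cpow ht.1, Complex.ofReal_cpow (sub_nonneg.2 ht.2)]
  rw [hbeta, ← Complex.ofReal_add, Complex.Gamma_ofReal, Complex.Gamma_ofReal,
    Complex.Gamma_ofReal] at h
  exact_mod_cast h

theorem Gamma_add_one_mul_Gamma_add_one_div {x y : ℝ} (hx : 0 ≤ x) (hy : 0 ≤ y) :
    Gamma (x + 1) * Gamma (y + 1) / Gamma (x + y + 1) =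
      (x + y + 1) * ∫ t in (0 : ℝ)..1, t ^ x * (1 - t) ^ y := by
  have h := Gamma_mul_Gamma_eq_integral (x := x + 1) (y := y + 1) (by positivity) (by positivity)
  simp only [add_sub_cancel_right] at h
  rw [h, show x + 1 + (y + 1) = x + y + 1 + 1 by ring, Gamma_add_one (by positivity)]
  have : Gamma (x + y + 1) ≠ 0 := (Gamma_pos_of_pos (by positivity)).ne'
  field_simp

end Real

theorem choose_mul_integral_pow_mul_one_sub_pow {k l : ℕ} (hlk : l ≤ k) :
    (k.choose l : ℝ) * ∫ t in (0 : ℝ)..1, t ^ l * (1 - t) ^ (k - l) = 1 / (k + 1) := by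
  have h := Gamma_add_one_mul_Gamma_add_one_div (Nat.cast_nonneg l) (Nat.cast_nonneg (k - l))
  simp only [rpow_natCast] at h
  rw [← Nat.cast_add, Nat.add_sub_cancel' hlk, Gamma_nat_eq_factorial, Gamma_nat_eq_factorial,
    Gamma_nat_eq_factorial] at h
  have hfact : (k.choose l : ℝ) * l.factorial * (k - l).factorial = k.factorial := by
    exact_mod_cast Nat.choose_mul_factorial_mul_factorial hlk
  have hC : (k.choose l : ℝ) ≠ 0 := Nat.cast_ne_zero.2 (Nat.choose_ne_zero hlk)
  rw [← hfact] at h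
  field_simp at h
  rw [eq_div_iff (by positivity)]
  linear_combination -h

theorem choose_mul_pow_mul_one_sub_pow_le_one (k l : ℕ) {t : ℝ} (ht₀ : 0 ≤ t) (ht₁ : t ≤ 1) :
    (k.choose l : ℝ) * (t ^ l * (1 - t) ^ (k - l)) ≤ 1 := by
  rcases lt_or_ge k l with hkl | hlk
  · simp [Nat.choose_eq_zero_of_lt hkl]
  have h1t : 0 ≤ 1 - t := sub_nonneg.2 ht₁
  calc (k.choose l : ℝ) * (t ^ l * (1 - t) ^ (k - l))
        = t ^ l * (1 - t) ^ (k - l) * k.choose l := by ring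
    _ ≤ ∑ m ∈ Finset.range (k + 1), t ^ m * (1 - t) ^ (k - m) * k.choose m :=
        Finset.single_le_sum (f := fun m => t ^ m * (1 - t) ^ (k - m) * k.choose m)
          (fun _ _ => by positivity) (Finset.mem_range.2 (Nat.lt_succ_of_le hlk))
    _ = 1 := by rw [← add_pow, add_sub_cancel, one_pow]

theorem Nat.two_le_choose {k l : ℕ} (hl : 0 < l) (hlk : l < k) : 2 ≤ k.choose l := by
  obtain ⟨k, rfl⟩ : ∃ m, k = m + 1 := ⟨k - 1, by omega⟩
  obtain ⟨l, rfl⟩ : ∃ j, l = j + 1 := ⟨l - 1, by omega⟩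
  have h₁ := Nat.choose_pos (n := k) (k := l) (by omega)
  have h₂ := Nat.choose_pos (n := k) (k := l + 1) (by omega)
  rw [Nat.choose_succ_succ']
  omega

theorem mul_inv_two_rpow_sub_one_le {a : ℝ} (ha : 1 ≤ a) : a * 2⁻¹ ^ (a - 1) ≤ 2 * √a := by
  have hbern : 1 + a ≤ 2 ^ a := by
    simpa [one_add_one_eq_two] using
      one_add_mul_self_le_rpow_one_add (s := 1) (by norm_num) ha
  have hsqrt : √a ≤ a := sqrt_le_self_iff.2 (Or.inr ha)
  have hpow : (2⁻¹ : ℝ) ^ (a - 1) = 2 / 2 ^ a := by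
    rw [inv_rpow zero_le_two, rpow_sub_one two_ne_zero]; field_simp
  rw [hpow, ← mul_div_assoc, div_le_iff₀ (by positivity)]
  calc a * 2 = 2 * (√a * √a) := by rw [mul_self_sqrt (by linarith)]; ring
    _ ≤ 2 * √a * 2 ^ a := by
      rw [← mul_assoc]; gcongr; linarith

theorem choose_mul_Gamma_mul_Gamma_div_Gamma_le {k l : ℕ} (hlk : l ≤ k) {a : ℝ} (ha : 1 ≤ a) :
    (k.choose l : ℝ) * Gamma (a * l + 1) * Gamma (a * ((k : ℝ) - l) + 1) / Gamma (a * k + 1) ≤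
      (a * k + 1) / (k + 1) * (k.choose l : ℝ)⁻¹ ^ (a - 1) := by
  set C : ℝ := (k.choose l : ℝ)
  set g : ℝ → ℝ := fun t => t ^ l * (1 - t) ^ (k - l)
  have hC : 0 < C := Nat.cast_pos.2 (Nat.choose_pos hlk)
  have hg_cont : Continuous g := by fun_prop
  have hg_nonneg : ∀ t ∈ Icc (0 : ℝ) 1, 0 ≤ g t := fun t ht => by
    have := sub_nonneg.2 ht.2; have := ht.1; positivity
  have hg_le : ∀ t ∈ Icc (0 : ℝ) 1, g t ≤ C⁻¹ := fun t ht => by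
    rw [← one_div, le_div_iff₀' hC]
    exact choose_mul_pow_mul_one_sub_pow_le_one k l ht.1 ht.2
  have hGamma : Gamma (a * l + 1) * Gamma (a * ((k : ℝ) - l) + 1) / Gamma (a * k + 1) =
      (a * k + 1) * ∫ t in (0 : ℝ)..1, g t ^ a := by
    have hkl : (0 : ℝ) ≤ k - l := sub_nonneg.2 (Nat.cast_le.2 hlk)
    have h := Gamma_add_one_mul_Gamma_add_one_div (x := a * l) (y := a * (k - l))
      (by positivity) (by positivity)
    rw [show a * l + a * (k - l) + 1 = a * k + 1 by ring] at h
    rw [h]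
    congr 1
    refine integral_congr fun t ht => ?_
    rw [uIcc_of_le zero_le_one] at ht
    simp only [g]
    rw [mul_rpow (pow_nonneg ht.1 _) (pow_nonneg (sub_nonneg.2 ht.2) _),
      ← rpow_natCast_mul ht.1, ← rpow_natCast_mul (sub_nonneg.2 ht.2), Nat.cast_sub hlk,
      mul_comm a, mul_comm a]
  have hintegral : ∫ t in (0 : ℝ)..1, g t ^ a ≤ C⁻¹ ^ (a - 1) * ∫ t in (0 : ℝ)..1, g t := by
    rw [← integral_const_mul]
    refine integral_mono_on zero_le_one ?_ ?_ fun t ht =>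
      rpow_le_rpow_sub_one_mul (hg_nonneg t ht) (hg_le t ht) ha
    · exact (hg_cont.rpow_const fun _ => Or.inr (by linarith)).intervalIntegrable _ _
    · exact (continuous_const.mul hg_cont).intervalIntegrable _ _
  calc C * Gamma (a * l + 1) * Gamma (a * ((k : ℝ) - l) + 1) / Gamma (a * k + 1)
      = C * ((a * k + 1) * ∫ t in (0 : ℝ)..1, g t ^ a) := by rw [mul_assoc, mul_div_assoc, hGamma]
    _ ≤ C * ((a * k + 1) * (C⁻¹ ^ (a - 1) * ∫ t in (0 : ℝ)..1, g t)) := by gcongr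
    _ = (a * k + 1) * C⁻¹ ^ (a - 1) * (C * ∫ t in (0 : ℝ)..1, g t) := by ring
    _ = (a * k + 1) / (k + 1) * C⁻¹ ^ (a - 1) := by
      rw [choose_mul_integral_pow_mul_one_sub_pow hlk]; ring

theorem stmt_4_general (k l : ℕ) (a : ℝ) (hl : 1 ≤ l) (hlk : l < k) (ha : 1 ≤ a) :
    (k.choose l : ℝ) * Real.Gamma (a * l + 1) * Real.Gamma (a * ((k : ℝ) - l) + 1) /
      Real.Gamma (a * k + 1) ≤ 2 * Real.sqrt a := by
  have hC : (2 : ℝ) ≤ k.choose l := by exact_mod_cast Nat.two_le_choose hl hlk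
  calc _ ≤ (a * k + 1) / (k + 1) * (k.choose l : ℝ)⁻¹ ^ (a - 1) :=
        choose_mul_Gamma_mul_Gamma_div_Gamma_le hlk.le ha
    _ ≤ a * 2⁻¹ ^ (a - 1) := by
      gcongr ?_ * ?_
      · rw [div_le_iff₀ (by positivity)]
        nlinarith
      · exact rpow_le_rpow (by positivity) (inv_anti₀ two_pos hC) (by linarith)
    _ ≤ 2 * √a := mul_inv_two_rpow_sub_one_le ha

/-- For integers `k ≥ 2`, `1 ≤ l < k` and real `a ≥ 1`,
`C(k,l) Γ(al+1) Γ(a(k-l)+1) / Γ(ak+1) ≤ 2 √a`. -/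
theorem stmt_4 (k l : ℕ) (a : ℝ) (hk : 2 ≤ k) (hl : 1 ≤ l) (hlk : l < k) (ha : 1 ≤ a) :
    (k.choose l : ℝ) * Real.Gamma (a * l + 1) * Real.Gamma (a * ((k : ℝ) - l) + 1) /
      Real.Gamma (a * k + 1) ≤ 2 * Real.sqrt a :=
  stmt_4_general k l a hl hlk ha
end

section
/- Let f : ℕ → ℝ≥0, let n ∈ ℕ ∪ {∞}, let 0 < ρ1 < ρ2, let λ > 0 and a ≥ 1. Then the shifted truncated Mittag–Leffler moments satisfy ℰ^n_{a,ρ1}(λ)⟨f⟩ ≤ (ℰ^n_a(λ)⟨f⟩)^((ρ2−ρ1)/ρ2) · (ℰ^n_{a,ρ2}(λ)⟨f⟩)^(ρ1/ρ2). -/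
/-!
Moments are log-convex in the exponent: pointwise, `c x^{(1-θ)r+θs} = (c x^r)^{1-θ} (c x^s)^θ`,
so Hölder's inequality with exponents `1/(1-θ)` and `1/θ` gives
`m_{(1-θ)r+θs} ≤ m_r^{1-θ} m_s^θ`. With `θ = ρ1/ρ2` this bounds each term of `ℰ^n_{a,ρ1}` by the
weighted geometric mean of the corresponding terms of `ℰ^n_a` and `ℰ^n_{a,ρ2}` (the weight
`λ^{ak}/Γ(ak+1)` is common to all three), and a second application of Hölder's inequality, now over
`k`, finishes the proof.
-/

/-- The `k`-th discrete moment `m_k⟨f⟩ = ∑_{i≥1} f(i) (i h)^k` with mesh size `h`. -/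
noncomputable def mom (h k : ℝ) (f : ℕ → ℝ) : ℝ :=
  ∑' i : ℕ, f (i + 1) * (((i : ℝ) + 1) * h) ^ k

open scoped Classical in
/-- The `k`-th summand of the shifted truncated Mittag–Leffler moment
`ℰ^n_{a,ρ}(λ)⟨f⟩`: it is `m_{k+ρ}⟨f⟩ λ^{ak}/Γ(ak+1)` for `1 ≤ k ≤ n` and `0` otherwise. -/
noncomputable def truncTerm (h : ℝ) (n : ℕ∞) (a ρ lam : ℝ) (f : ℕ → ℝ) (k : ℕ) : ℝ :=
  if ((k : ℕ∞) + 1 ≤ n) then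
    mom h (((k : ℝ) + 1) + ρ) f * lam ^ (a * ((k : ℝ) + 1)) /
      Real.Gamma (a * ((k : ℝ) + 1) + 1)
  else 0

/-- The shifted truncated Mittag–Leffler moment
`ℰ^n_{a,ρ}(λ)⟨f⟩ = ∑_{k=1}^n m_{k+ρ}⟨f⟩ λ^{ak}/Γ(ak+1)`, with `n ∈ ℕ ∪ {∞}`. -/
noncomputable def truncML (h : ℝ) (n : ℕ∞) (a ρ lam : ℝ) (f : ℕ → ℝ) : ℝ :=
  ∑' k : ℕ, truncTerm h n a ρ lam f k

section Interpolation

variable {θ : ℝ}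

theorem Real.rpow_one_sub_mul_rpow_self {c : ℝ} (hc : 0 ≤ c) : c ^ (1 - θ) * c ^ θ = c := by
  rw [← Real.rpow_add' hc (by norm_num), sub_add_cancel, Real.rpow_one]

theorem Real.mul_rpow_one_sub_mul_mul_rpow {c x y : ℝ} (hc : 0 ≤ c) (hx : 0 ≤ x) (hy : 0 ≤ y) :
    (c * x) ^ (1 - θ) * (c * y) ^ θ = c * (x ^ (1 - θ) * y ^ θ) := by
  rw [Real.mul_rpow hc hx, Real.mul_rpow hc hy, mul_mul_mul_comm,
    Real.rpow_one_sub_mul_rpow_self hc]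

theorem Real.mul_rpow_convex_comb {c x : ℝ} (hc : 0 ≤ c) (hx : 0 < x) (r s : ℝ) :
    c * x ^ ((1 - θ) * r + θ * s) = (c * x ^ r) ^ (1 - θ) * (c * x ^ s) ^ θ := by
  rw [Real.mul_rpow_one_sub_mul_mul_rpow hc (by positivity) (by positivity),
    ← Real.rpow_mul hx.le, ← Real.rpow_mul hx.le, ← Real.rpow_add hx, mul_comm r, mul_comm s]

theorem tsum_le_rpow_mul_rpow_of_le {ι : Type*} (hθ0 : 0 < θ) (hθ1 : θ < 1) {u v w : ι → ℝ}
    (hu : ∀ i, 0 ≤ u i) (hv : ∀ i, 0 ≤ v i) (hw : ∀ i, 0 ≤ w i)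
    (hv_sum : Summable v) (hw_sum : Summable w) (huvw : ∀ i, u i ≤ v i ^ (1 - θ) * w i ^ θ) :
    ∑' i, u i ≤ (∑' i, v i) ^ (1 - θ) * (∑' i, w i) ^ θ := by
  have hθ' : 0 < 1 - θ := sub_pos.mpr hθ1
  have hpq : (1 / (1 - θ)).HolderConjugate (1 / θ) := by
    rw [Real.holderConjugate_iff, one_div, one_div, inv_inv, inv_inv]
    exact ⟨(one_lt_inv₀ hθ').mpr (by linarith), by ring⟩
  have hpow {c t : ℝ} (hc : 0 ≤ c) (ht : 0 < t) : (c ^ t) ^ (1 / t) = c := by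
    rw [← Real.rpow_mul hc, mul_one_div_cancel ht.ne', Real.rpow_one]
  obtain ⟨hsum, hle⟩ := Real.summable_and_inner_le_Lp_mul_Lq_tsum_of_nonneg hpq
    (fun i => Real.rpow_nonneg (hv i) (1 - θ)) (fun i => Real.rpow_nonneg (hw i) θ)
    (by simpa only [hpow (hv _) hθ'] using hv_sum) (by simpa only [hpow (hw _) hθ0] using hw_sum)
  simp only [hpow (hv _) hθ', hpow (hw _) hθ0, one_div_one_div] at hle
  exact (Summable.tsum_le_tsum huvw (hsum.of_nonneg_of_le hu huvw) hsum).trans hle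

end Interpolation

section MittagLeffler

variable {h a lam θ : ℝ} {n : ℕ∞} {f : ℕ → ℝ}

theorem mom_nonneg (hh : 0 ≤ h) (hf : ∀ i, 0 ≤ f i) (r : ℝ) : 0 ≤ mom h r f :=
  tsum_nonneg fun i => mul_nonneg (hf _) (Real.rpow_nonneg (by positivity) _)

theorem mom_convex_comb_le (hh : 0 < h) (hf : ∀ i, 0 ≤ f i) (hθ0 : 0 < θ) (hθ1 : θ < 1)
    {r s : ℝ} (hr : Summable fun i : ℕ => f (i + 1) * (((i : ℝ) + 1) * h) ^ r)
    (hs : Summable fun i : ℕ => f (i + 1) * (((i : ℝ) + 1) * h) ^ s) :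
    mom h ((1 - θ) * r + θ * s) f ≤ mom h r f ^ (1 - θ) * mom h s f ^ θ := by
  have hterm (t : ℝ) (i : ℕ) : 0 ≤ f (i + 1) * (((i : ℝ) + 1) * h) ^ t :=
    mul_nonneg (hf _) (Real.rpow_nonneg (by positivity) _)
  exact tsum_le_rpow_mul_rpow_of_le hθ0 hθ1 (hterm _) (hterm r) (hterm s) hr hs fun i =>
    (Real.mul_rpow_convex_comb (hf _) (by positivity) r s).le

theorem truncTerm_nonneg (hh : 0 ≤ h) (hf : ∀ i, 0 ≤ f i) (ha : 0 ≤ a) (hlam : 0 ≤ lam)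
    (ρ : ℝ) (k : ℕ) : 0 ≤ truncTerm h n a ρ lam f k := by
  unfold truncTerm
  split_ifs
  · have hΓ : 0 < Real.Gamma (a * ((k : ℝ) + 1) + 1) := Real.Gamma_pos_of_pos (by positivity)
    exact div_nonneg (mul_nonneg (mom_nonneg hh hf _) (Real.rpow_nonneg hlam _)) hΓ.le
  · exact le_rfl

theorem truncTerm_convex_comb_le (hh : 0 < h) (hf : ∀ i, 0 ≤ f i) (ha : 0 ≤ a) (hlam : 0 ≤ lam)
    (hθ0 : 0 < θ) (hθ1 : θ < 1)
    (hmom : ∀ r : ℝ, Summable fun i : ℕ => f (i + 1) * (((i : ℝ) + 1) * h) ^ r)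
    (ρ σ : ℝ) (k : ℕ) :
    truncTerm h n a ((1 - θ) * ρ + θ * σ) lam f k ≤
      truncTerm h n a ρ lam f k ^ (1 - θ) * truncTerm h n a σ lam f k ^ θ := by
  unfold truncTerm
  split_ifs
  · rw [mul_div_assoc, mul_div_assoc, mul_div_assoc]
    set c := lam ^ (a * ((k : ℝ) + 1)) / Real.Gamma (a * ((k : ℝ) + 1) + 1)
    have hc : 0 ≤ c := div_nonneg (Real.rpow_nonneg hlam _)
      (Real.Gamma_pos_of_pos (by positivity)).le
    have hexp : (k : ℝ) + 1 + ((1 - θ) * ρ + θ * σ) =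
        (1 - θ) * ((k : ℝ) + 1 + ρ) + θ * ((k : ℝ) + 1 + σ) := by ring
    rw [mul_comm (mom _ _ _) c, mul_comm (mom _ _ _) c, mul_comm (mom _ _ _) c,
      Real.mul_rpow_one_sub_mul_mul_rpow hc (mom_nonneg hh.le hf _) (mom_nonneg hh.le hf _), hexp]
    exact mul_le_mul_of_nonneg_left (mom_convex_comb_le hh hf hθ0 hθ1 (hmom _) (hmom _)) hc
  · rw [Real.zero_rpow (sub_pos.mpr hθ1).ne', zero_mul]

theorem truncML_convex_comb_le (hh : 0 < h) (hf : ∀ i, 0 ≤ f i) (ha : 0 ≤ a) (hlam : 0 ≤ lam)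
    (hθ0 : 0 < θ) (hθ1 : θ < 1)
    (hmom : ∀ r : ℝ, Summable fun i : ℕ => f (i + 1) * (((i : ℝ) + 1) * h) ^ r)
    {ρ σ : ℝ} (hρ : Summable (truncTerm h n a ρ lam f))
    (hσ : Summable (truncTerm h n a σ lam f)) :
    truncML h n a ((1 - θ) * ρ + θ * σ) lam f ≤
      truncML h n a ρ lam f ^ (1 - θ) * truncML h n a σ lam f ^ θ :=
  tsum_le_rpow_mul_rpow_of_le hθ0 hθ1 (truncTerm_nonneg hh.le hf ha hlam _)
    (truncTerm_nonneg hh.le hf ha hlam _) (truncTerm_nonneg hh.le hf ha hlam _) hρ hσ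
    (truncTerm_convex_comb_le hh hf ha hlam hθ0 hθ1 hmom ρ σ)

end MittagLeffler

theorem stmt_8_general (h : ℝ) (n : ℕ∞) (a ρ1 ρ2 lam : ℝ) (f : ℕ → ℝ)
    (hh : 0 < h) (hf : ∀ i, 0 ≤ f i)
    (hρ1 : 0 < ρ1) (hρ12 : ρ1 < ρ2) (hlam : 0 < lam) (ha : 1 ≤ a)
    (hmom : ∀ r : ℝ, Summable (fun i : ℕ => f (i + 1) * (((i : ℝ) + 1) * h) ^ r))
    (hs0 : Summable (truncTerm h n a 0 lam f))
    (hs2 : Summable (truncTerm h n a ρ2 lam f)) :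
    truncML h n a ρ1 lam f ≤
      (truncML h n a 0 lam f) ^ ((ρ2 - ρ1) / ρ2) * (truncML h n a ρ2 lam f) ^ (ρ1 / ρ2) := by
  have hρ2 : 0 < ρ2 := hρ1.trans hρ12
  have key := truncML_convex_comb_le (n := n) hh hf (by linarith) hlam.le (div_pos hρ1 hρ2)
    ((div_lt_one hρ2).mpr hρ12) hmom hs0 hs2
  have hρ1_eq : (1 - ρ1 / ρ2) * 0 + ρ1 / ρ2 * ρ2 = ρ1 := by field_simp; ring
  have hθ_eq : 1 - ρ1 / ρ2 = (ρ2 - ρ1) / ρ2 := by field_simp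
  rwa [hρ1_eq, hθ_eq] at key

/-- Interpolation for shifted truncated Mittag–Leffler moments: for `0 < ρ1 < ρ2`,
`ℰ^n_{a,ρ1}(λ)⟨f⟩ ≤ (ℰ^n_a(λ)⟨f⟩)^((ρ2-ρ1)/ρ2) (ℰ^n_{a,ρ2}(λ)⟨f⟩)^(ρ1/ρ2)`
(here `ℰ^n_a = ℰ^n_{a,0}`). -/
theorem stmt_8 (h : ℝ) (n : ℕ∞) (a ρ1 ρ2 lam : ℝ) (f : ℕ → ℝ)
    (hh : 0 < h) (hf : ∀ i, 0 ≤ f i)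
    (hρ1 : 0 < ρ1) (hρ12 : ρ1 < ρ2) (hlam : 0 < lam) (ha : 1 ≤ a)
    (hmom : ∀ r : ℝ, Summable (fun i : ℕ => f (i + 1) * (((i : ℝ) + 1) * h) ^ r))
    (hs0 : Summable (truncTerm h n a 0 lam f))
    (hs1 : Summable (truncTerm h n a ρ1 lam f))
    (hs2 : Summable (truncTerm h n a ρ2 lam f)) :
    truncML h n a ρ1 lam f ≤
      (truncML h n a 0 lam f) ^ ((ρ2 - ρ1) / ρ2) * (truncML h n a ρ2 lam f) ^ (ρ1 / ρ2) :=
  stmt_8_general h n a ρ1 ρ2 lam f hh hf hρ1 hρ12 hlam ha hmom hs0 hs2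
end

section
/- Combinatorial moment estimate: let f : ℕ → ℝ≥0 have all moments finite and let k ≥ 1 be an integer. Then m_k⟨S[f]⟩ ≤ 2^{β1+1} ∑_{l=1}^{k−1} C(k,l) · m_{α1+l}⟨f⟩ · m_{α1+β1+k−l}⟨f⟩. -/
/-- Symmetric interaction kernel `K(x,y) = x^α y^α (x+y)^β`. -/
noncomputable def Kker (α β : ℝ) (x y : ℝ) : ℝ := x ^ α * y ^ α * (x + y) ^ β

/-- The operator `S^{(1)}`:
`S_i^{(1)}[f] = ∑_{j=1}^{i-1} K_1(jh,(i-j)h) f_j f_{i-j} - 2 ∑_{j≥1} K_1(ih,jh) f_i f_j`. -/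
noncomputable def Sop1 (h α β : ℝ) (f : ℕ → ℝ) (i : ℕ) : ℝ :=
  (∑ j ∈ Finset.Ico 1 i, Kker α β ((j : ℝ) * h) (((i - j : ℕ) : ℝ) * h) * f j * f (i - j))
    - 2 * ∑' j : ℕ, Kker α β ((i : ℝ) * h) (((j : ℝ) + 1) * h) * f i * f (j + 1)

/-- The common form of the operators `S^{(2)}` and `S^{(3)}`:
`-∑_{j=1}^{i-1} K((i-j)h,jh) f_i f_j + ∑_{j>i} K((j-i)h,ih) f_i f_j
  + ∑_{j>i} K(ih,(j-i)h) f_j f_{j-i}`. -/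
noncomputable def Sop23 (h α β : ℝ) (f : ℕ → ℝ) (i : ℕ) : ℝ :=
  -(∑ j ∈ Finset.Ico 1 i, Kker α β (((i - j : ℕ) : ℝ) * h) ((j : ℝ) * h) * f i * f j)
    + (∑' j : ℕ, Kker α β (((j : ℝ) + 1) * h) ((i : ℝ) * h) * f i * f (i + j + 1))
    + ∑' j : ℕ, Kker α β ((i : ℝ) * h) (((j : ℝ) + 1) * h) * f (i + j + 1) * f (j + 1)

/-- The full discrete 3-wave interaction operator `S = S^{(1)} + S^{(2)} + S^{(3)}`. -/
noncomputable def Sfull (h α1 β1 α2 β2 α3 β3 : ℝ) (f : ℕ → ℝ) (i : ℕ) : ℝ :=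
  Sop1 h α1 β1 f i + Sop23 h α2 β2 f i + Sop23 h α3 β3 f i

open Finset

/-! Testing `S[f]` against `φ(n) = (nh)^k` and symmetrizing writes `m_k⟨S[f]⟩` as double series
over pairs of grid points. For `S^{(2)}` and `S^{(3)}` the weight is `φ(a) + φ(b) - φ(a+b) ≤ 0`
(superadditivity of `x ↦ x^k`), so these contributions are dropped. For `S^{(1)}` the weight is
`(x+y)^k - x^k - y^k = ∑_{l=1}^{k-1} C(k,l) x^l y^{k-l}`; after
`(x+y)^{β₁} ≤ 2^{β₁} max(x,y)^{β₁} ≤ 2^{β₁} (x^{β₁} + y^{β₁})` every term factors into a product of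
two moments, and the reflection `l ↦ k - l` merges the two halves into the factor `2^{β₁+1}`. -/

lemma rpow_add_le_two_rpow_mul {u v r : ℝ} (hu : 0 ≤ u) (hv : 0 ≤ v) (hr : 0 ≤ r) :
    (u + v) ^ r ≤ 2 ^ r * (u ^ r + v ^ r) := by
  have hmax : (max u v) ^ r ≤ u ^ r + v ^ r := by
    rcases le_total u v with huv | hvu
    · rw [max_eq_right huv]; exact le_add_of_nonneg_left (by positivity)
    · rw [max_eq_left hvu]; exact le_add_of_nonneg_right (by positivity)
  calc (u + v) ^ r ≤ (2 * max u v) ^ r := by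
        gcongr; linarith [le_max_left u v, le_max_right u v]
    _ = 2 ^ r * (max u v) ^ r := Real.mul_rpow zero_le_two (le_max_of_le_left hu)
    _ ≤ 2 ^ r * (u ^ r + v ^ r) := by gcongr

lemma add_pow_sub_pow_sub_pow {R : Type*} [CommRing R] (t s : R) {k : ℕ} (hk : 1 ≤ k) :
    (t + s) ^ k - t ^ k - s ^ k = ∑ l ∈ Ico 1 k, (k.choose l : R) * (t ^ l * s ^ (k - l)) := by
  rw [add_pow, range_eq_Ico, sum_Ico_succ_top (Nat.zero_le k), sum_eq_sum_Ico_succ_bot hk]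
  simp only [pow_zero, Nat.sub_zero, Nat.choose_zero_right, Nat.choose_self, Nat.cast_one,
    one_mul, mul_one, Nat.sub_self, zero_add]
  simp_rw [mul_comm _ (k.choose _ : R)]
  abel

lemma sum_Ico_choose_mul_reflect (k : ℕ) (F : ℝ → ℝ → ℝ) :
    ∑ l ∈ Ico 1 k, (k.choose l : ℝ) * F l ((k : ℝ) - l)
      = ∑ l ∈ Ico 1 k, (k.choose l : ℝ) * F ((k : ℝ) - l) l := by
  refine sum_nbij' (k - ·) (k - ·) ?_ ?_ ?_ ?_ ?_ <;> intro l hl <;>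
    simp only [mem_Ico] at hl ⊢
  · omega
  · omega
  · omega
  · omega
  · rw [Nat.choose_symm hl.2.le, Nat.cast_sub hl.2.le, sub_sub_cancel]

lemma pow_le_pow_natCast_add {h : ℝ} (hh : 0 ≤ h) (k p q : ℕ) :
    ((p : ℝ) * h) ^ k ≤ (((p + q : ℕ) : ℝ) * h) ^ k := by
  gcongr; simp

lemma pow_add_pow_le_pow_natCast_add {h : ℝ} (hh : 0 ≤ h) {k : ℕ} (hk : k ≠ 0) (p q : ℕ) :
    ((p : ℝ) * h) ^ k + ((q : ℝ) * h) ^ k ≤ (((p + q : ℕ) : ℝ) * h) ^ k := by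
  rw [Nat.cast_add, add_mul]
  exact pow_add_pow_le (by positivity) (by positivity) hk

section Kernel

variable {α β u v : ℝ}

lemma Kker_comm (x y : ℝ) : Kker α β x y = Kker α β y x := by
  unfold Kker; rw [add_comm]; ring

lemma Kker_nonneg {x y : ℝ} (hx : 0 ≤ x) (hy : 0 ≤ y) : 0 ≤ Kker α β x y := by
  unfold Kker; positivity

lemma Kker_mul_pow_le (hu : 0 < u) (hv : 0 < v) (hβ : 0 ≤ β) (k : ℕ) :
    Kker α β u v * (u + v) ^ k
      ≤ 2 ^ (β + k) * (u ^ (α + (β + k)) * v ^ α + u ^ α * v ^ (α + (β + k))) := by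
  have hsplit := rpow_add_le_two_rpow_mul hu.le hv.le (add_nonneg hβ (Nat.cast_nonneg k))
  calc Kker α β u v * (u + v) ^ k = u ^ α * v ^ α * (u + v) ^ (β + k) := by
        rw [Kker, Real.rpow_add (by positivity), Real.rpow_natCast, mul_assoc]
    _ ≤ u ^ α * v ^ α * (2 ^ (β + k) * (u ^ (β + k) + v ^ (β + k))) := by gcongr
    _ = _ := by rw [Real.rpow_add hu α, Real.rpow_add hv α]; ring

lemma Kker_swap_mul_pow_le (hu : 0 < u) (hv : 0 < v) (hα : 0 ≤ α) (k : ℕ) :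
    Kker α β v u * (u + v) ^ k ≤ u ^ α * (u + v) ^ (α + β + k) := by
  have huv : 0 < u + v := by positivity
  calc Kker α β v u * (u + v) ^ k = v ^ α * u ^ α * (u + v) ^ (β + k) := by
        rw [Kker, add_comm v, Real.rpow_add huv, Real.rpow_natCast, mul_assoc]
    _ ≤ (u + v) ^ α * u ^ α * (u + v) ^ (β + k) := by gcongr; linarith
    _ = _ := by rw [add_assoc α β, Real.rpow_add huv α]; ring

lemma Kker_mul_add_pow_sub_le (hu : 0 < u) (hv : 0 < v) (hβ : 0 ≤ β) {k : ℕ} (hk : 1 ≤ k) :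
    Kker α β u v * ((u + v) ^ k - u ^ k - v ^ k) ≤ 2 ^ β * ∑ l ∈ Ico 1 k, (k.choose l : ℝ) *
      (u ^ (α + β + l) * v ^ (α + ((k : ℝ) - l)) + u ^ (α + l) * v ^ (α + β + ((k : ℝ) - l))) := by
  rw [add_pow_sub_pow_sub_pow u v hk]
  calc Kker α β u v * ∑ l ∈ Ico 1 k, (k.choose l : ℝ) * (u ^ l * v ^ (k - l))
      = u ^ α * v ^ α * (u + v) ^ β
          * ∑ l ∈ Ico 1 k, (k.choose l : ℝ) * (u ^ l * v ^ (k - l)) := rfl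
    _ ≤ u ^ α * v ^ α * (2 ^ β * (u ^ β + v ^ β))
          * ∑ l ∈ Ico 1 k, (k.choose l : ℝ) * (u ^ l * v ^ (k - l)) := by
        gcongr; exact rpow_add_le_two_rpow_mul hu.le hv.le hβ
    _ = _ := by
        rw [mul_sum, mul_sum]
        refine sum_congr rfl fun l hl => ?_
        rw [← Nat.cast_sub (mem_Ico.mp hl).2.le]
        simp only [Real.rpow_add hu, Real.rpow_add hv, Real.rpow_natCast]
        ring

end Kernel

noncomputable def pairSum (F : ℕ → ℕ → ℝ) : ℝ := ∑' z : ℕ × ℕ, F (z.1 + 1) (z.2 + 1)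

def PairSummable (F : ℕ → ℕ → ℝ) : Prop := Summable fun z : ℕ × ℕ => F (z.1 + 1) (z.2 + 1)

section PairSum

variable {F : ℕ → ℕ → ℝ}

lemma PairSummable.hasSum_sum_Ico_one_sub (hF : PairSummable F) :
    HasSum (fun i => ∑ j ∈ Ico 1 (i + 1), F j (i + 1 - j)) (pairSum F) := by
  have hanti : HasSum (fun n => ∑ p ∈ antidiagonal n, F (p.1 + 1) (p.2 + 1)) (pairSum F) := by
    refine (HasAntidiagonal.sigmaAntidiagonalEquivProd.hasSum_iff.mpr hF.hasSum).sigma fun n => ?_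
    rw [← sum_finset_coe]
    exact hasSum_fintype _
  have hshift (n : ℕ) : ∑ j ∈ Ico 1 (n + 1 + 1), F j (n + 1 + 1 - j)
      = ∑ p ∈ antidiagonal n, F (p.1 + 1) (p.2 + 1) := by
    rw [Nat.sum_antidiagonal_eq_sum_range_succ_mk, sum_Ico_eq_sum_range]
    refine sum_congr (by simp) fun j hj => ?_
    have : j ≤ n := Nat.lt_succ_iff.mp (mem_range.mp hj)
    congr 1 <;> omega
  refine (hasSum_nat_add_iff' 1).mp ?_
  simpa [hshift] using hanti

lemma PairSummable.hasSum_tsum (hF : PairSummable F) :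
    HasSum (fun i => ∑' j, F (i + 1) (j + 1)) (pairSum F) :=
  hF.hasSum.prod_fiberwise fun i => (hF.prod_factor i).hasSum

lemma PairSummable.comm (hF : PairSummable F) : PairSummable fun p q => F q p :=
  hF.prod_symm

lemma pairSum_comm (F : ℕ → ℕ → ℝ) : (pairSum fun p q => F q p) = pairSum F :=
  (Equiv.prodComm ℕ ℕ).tsum_eq fun z => F (z.1 + 1) (z.2 + 1)

lemma PairSummable.mul_of_le {w φ ψ : ℕ → ℕ → ℝ} (hw : ∀ p q, 0 ≤ w p q)
    (hφ : ∀ p q, 0 ≤ φ p q) (hle : ∀ p q, φ p q ≤ ψ p q)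
    (hψ : PairSummable fun p q => w p q * ψ p q) : PairSummable fun p q => w p q * φ p q :=
  Summable.of_nonneg_of_le (fun _ => mul_nonneg (hw _ _) (hφ _ _))
    (fun _ => mul_le_mul_of_nonneg_left (hle _ _) (hw _ _)) hψ

end PairSum

noncomputable def pairRate (h α β : ℝ) (f : ℕ → ℝ) (p q : ℕ) : ℝ :=
  Kker α β (p * h) (q * h) * f p * f q

noncomputable def splitRate (h α β : ℝ) (f : ℕ → ℝ) (a b : ℕ) : ℝ :=
  Kker α β (b * h) (a * h) * f (a + b) * f a

section WeakFormulation

variable {h α β : ℝ} {f φ : ℕ → ℝ}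

lemma pairRate_comm (p q : ℕ) : pairRate h α β f p q = pairRate h α β f q p := by
  unfold pairRate; rw [Kker_comm]; ring

lemma Sop1_eq (n : ℕ) : Sop1 h α β f n =
    ∑ j ∈ Ico 1 n, pairRate h α β f j (n - j) - 2 * ∑' j, pairRate h α β f n (j + 1) := by
  simp [Sop1, pairRate]

lemma Sop23_eq (n : ℕ) : Sop23 h α β f n = -∑ j ∈ Ico 1 n, splitRate h α β f j (n - j)
    + ∑' j, splitRate h α β f n (j + 1) + ∑' j, splitRate h α β f (j + 1) n := by
  have hconv : ∑ j ∈ Ico 1 n, splitRate h α β f j (n - j)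
      = ∑ j ∈ Ico 1 n, Kker α β (((n - j : ℕ) : ℝ) * h) ((j : ℝ) * h) * f n * f j :=
    sum_congr rfl fun j hj => by rw [splitRate, Nat.add_sub_cancel' (mem_Ico.mp hj).2.le]
  have hfst (j : ℕ) : splitRate h α β f n (j + 1)
      = Kker α β (((j : ℝ) + 1) * h) ((n : ℝ) * h) * f n * f (n + j + 1) := by
    rw [splitRate, Nat.cast_succ, ← add_assoc]; ring
  have hsnd (j : ℕ) : splitRate h α β f (j + 1) n
      = Kker α β ((n : ℝ) * h) (((j : ℝ) + 1) * h) * f (n + j + 1) * f (j + 1) := by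
    rw [splitRate, Nat.cast_succ, add_comm (j + 1), ← add_assoc]
  simp only [Sop23, hconv, hfst, hsnd]

theorem hasSum_Sop1_mul (hgain : PairSummable fun p q => pairRate h α β f p q * φ (p + q))
    (hloss : PairSummable fun p q => pairRate h α β f p q * φ p) :
    HasSum (fun i => Sop1 h α β f (i + 1) * φ (i + 1))
      (pairSum fun p q => pairRate h α β f p q * (φ (p + q) - φ p - φ q)) := by
  have hloss' : PairSummable fun p q => pairRate h α β f p q * φ q := by
    convert hloss.comm using 3 with p q
    rw [pairRate_comm]
  have hswap : (pairSum fun p q => pairRate h α β f p q * φ q)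
      = pairSum fun p q => pairRate h α β f p q * φ p := by
    rw [← pairSum_comm fun p q => pairRate h α β f p q * φ p]
    congr 2 with p q
    rw [pairRate_comm]
  have hterm (i : ℕ) : Sop1 h α β f (i + 1) * φ (i + 1)
      = ∑ j ∈ Ico 1 (i + 1), pairRate h α β f j (i + 1 - j) * φ (j + (i + 1 - j))
        - 2 * ∑' j, pairRate h α β f (i + 1) (j + 1) * φ (i + 1) := by
    rw [Sop1_eq, sub_mul, sum_mul, mul_assoc, ← tsum_mul_right]
    congr 1
    exact sum_congr rfl fun j hj => by rw [Nat.add_sub_cancel' (mem_Ico.mp hj).2.le]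
  have hvalue : (pairSum fun p q => pairRate h α β f p q * (φ (p + q) - φ p - φ q))
      = (pairSum fun p q => pairRate h α β f p q * φ (p + q))
        - 2 * pairSum fun p q => pairRate h α β f p q * φ p := by
    -- `pairRate` is symmetric, so the loss `2 ∑ R(p,q) φ(p)` splits into `φ(p)` and `φ(q)` parts
    rw [two_mul, ← sub_sub]
    nth_rw 2 [← hswap]
    simp only [pairSum, mul_sub]
    rw [(hgain.sub hloss).tsum_sub hloss', hgain.tsum_sub hloss]
  simp_rw [hterm, hvalue]
  exact hgain.hasSum_sum_Ico_one_sub.sub (hloss.hasSum_tsum.mul_left 2)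

theorem hasSum_Sop23_mul (hgain : PairSummable fun a b => splitRate h α β f a b * φ (a + b))
    (hfst : PairSummable fun a b => splitRate h α β f a b * φ a)
    (hsnd : PairSummable fun a b => splitRate h α β f a b * φ b) :
    HasSum (fun i => Sop23 h α β f (i + 1) * φ (i + 1))
      (pairSum fun a b => splitRate h α β f a b * (φ a + φ b - φ (a + b))) := by
  have hterm (i : ℕ) : Sop23 h α β f (i + 1) * φ (i + 1)
      = -∑ j ∈ Ico 1 (i + 1), splitRate h α β f j (i + 1 - j) * φ (j + (i + 1 - j))
        + ∑' j, splitRate h α β f (i + 1) (j + 1) * φ (i + 1)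
        + ∑' j, splitRate h α β f (j + 1) (i + 1) * φ (i + 1) := by
    rw [Sop23_eq, add_mul, add_mul, neg_mul, sum_mul, ← tsum_mul_right, ← tsum_mul_right]
    congr 3
    exact sum_congr rfl fun j hj => by rw [Nat.add_sub_cancel' (mem_Ico.mp hj).2.le]
  have hvalue : (pairSum fun a b => splitRate h α β f a b * (φ a + φ b - φ (a + b)))
      = -(pairSum fun a b => splitRate h α β f a b * φ (a + b))
        + (pairSum fun a b => splitRate h α β f a b * φ a)
        + pairSum fun a b => splitRate h α β f b a * φ a := by
    rw [pairSum_comm fun a b => splitRate h α β f a b * φ b]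
    simp only [pairSum, mul_sub, mul_add]
    rw [(hfst.add hsnd).tsum_sub hgain, hfst.tsum_add hsnd]
    ring
  simp_rw [hterm, hvalue]
  exact (hgain.hasSum_sum_Ico_one_sub.neg.add hfst.hasSum_tsum).add hsnd.comm.hasSum_tsum

end WeakFormulation

noncomputable def momTerm (h r : ℝ) (f : ℕ → ℝ) (n : ℕ) : ℝ := f n * ((n : ℝ) * h) ^ r

def HasFiniteMoments (h : ℝ) (f : ℕ → ℝ) : Prop :=
  ∀ r : ℝ, Summable fun i : ℕ => f (i + 1) * (((i : ℝ) + 1) * h) ^ r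

lemma mom_eq_tsum_momTerm (h r : ℝ) (f : ℕ → ℝ) :
    mom h r f = ∑' i, momTerm h r f (i + 1) := by
  simp [mom, momTerm]

section Moments

variable {h α β : ℝ} {f : ℕ → ℝ}

lemma pairRate_nonneg (hh : 0 ≤ h) (hf : ∀ i, 0 ≤ f i) (p q : ℕ) :
    0 ≤ pairRate h α β f p q :=
  mul_nonneg (mul_nonneg (Kker_nonneg (by positivity) (by positivity)) (hf p)) (hf q)

lemma splitRate_nonneg (hh : 0 ≤ h) (hf : ∀ i, 0 ≤ f i) (a b : ℕ) :
    0 ≤ splitRate h α β f a b :=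
  mul_nonneg (mul_nonneg (Kker_nonneg (by positivity) (by positivity)) (hf _)) (hf a)

lemma pairRate_mul_pow_le (hh : 0 < h) (hβ : 0 ≤ β) (hf : ∀ i, 0 ≤ f i) (k : ℕ) {p q : ℕ}
    (hp : 0 < p) (hq : 0 < q) :
    pairRate h α β f p q * (((p + q : ℕ) : ℝ) * h) ^ k ≤ 2 ^ (β + k) *
      (momTerm h (α + (β + k)) f p * momTerm h α f q
        + momTerm h α f p * momTerm h (α + (β + k)) f q) := by
  have hbound := Kker_mul_pow_le (α := α) (mul_pos (Nat.cast_pos.mpr hp) hh)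
    (mul_pos (Nat.cast_pos.mpr hq) hh) hβ k
  calc pairRate h α β f p q * (((p + q : ℕ) : ℝ) * h) ^ k
      = f p * f q * (Kker α β (p * h) (q * h) * (p * h + q * h) ^ k) := by
        rw [pairRate, Nat.cast_add, add_mul]; ring
    _ ≤ _ := mul_le_mul_of_nonneg_left hbound (mul_nonneg (hf p) (hf q))
    _ = _ := by simp only [momTerm]; ring

lemma splitRate_mul_pow_le (hh : 0 < h) (hα : 0 ≤ α) (hf : ∀ i, 0 ≤ f i) (k : ℕ) {a b : ℕ}
    (ha : 0 < a) (hb : 0 < b) :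
    splitRate h α β f a b * (((a + b : ℕ) : ℝ) * h) ^ k
      ≤ momTerm h α f a * momTerm h (α + β + k) f (a + b) := by
  have hbound := Kker_swap_mul_pow_le (β := β) (mul_pos (Nat.cast_pos.mpr ha) hh)
    (mul_pos (Nat.cast_pos.mpr hb) hh) hα k
  calc splitRate h α β f a b * (((a + b : ℕ) : ℝ) * h) ^ k
      = f (a + b) * f a * (Kker α β (b * h) (a * h) * (a * h + b * h) ^ k) := by
        rw [splitRate, Nat.cast_add, add_mul]; ring
    _ ≤ _ := mul_le_mul_of_nonneg_left hbound (mul_nonneg (hf _) (hf a))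
    _ = _ := by rw [momTerm, momTerm, Nat.cast_add, add_mul]; ring

lemma pairRate_mul_add_pow_sub_le (hh : 0 < h) (hβ : 0 ≤ β) (hf : ∀ i, 0 ≤ f i) {k : ℕ}
    (hk : 1 ≤ k) {p q : ℕ} (hp : 0 < p) (hq : 0 < q) :
    pairRate h α β f p q * ((((p + q : ℕ) : ℝ) * h) ^ k - ((p : ℝ) * h) ^ k - ((q : ℝ) * h) ^ k)
      ≤ 2 ^ β * ∑ l ∈ Ico 1 k, (k.choose l : ℝ) *
        (momTerm h (α + β + l) f p * momTerm h (α + ((k : ℝ) - l)) f q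
          + momTerm h (α + l) f p * momTerm h (α + β + ((k : ℝ) - l)) f q) := by
  have hbound := Kker_mul_add_pow_sub_le (α := α) (mul_pos (Nat.cast_pos.mpr hp) hh)
    (mul_pos (Nat.cast_pos.mpr hq) hh) hβ hk
  calc _ = f p * f q * (Kker α β (p * h) (q * h)
        * ((p * h + q * h) ^ k - ((p : ℝ) * h) ^ k - ((q : ℝ) * h) ^ k)) := by
        rw [pairRate, Nat.cast_add, add_mul]; ring
    _ ≤ _ := mul_le_mul_of_nonneg_left hbound (mul_nonneg (hf p) (hf q))
    _ = _ := by
        rw [mul_left_comm, mul_sum]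
        congr 1
        refine sum_congr rfl fun l _ => ?_
        simp only [momTerm]; ring

lemma HasFiniteMoments.summable_momTerm (hmom : HasFiniteMoments h f) (r : ℝ) :
    Summable fun i => momTerm h r f (i + 1) :=
  (hmom r).congr fun i => by simp [momTerm]

lemma HasFiniteMoments.pairSummable_momTerm_mul (hmom : HasFiniteMoments h f) (hh : 0 ≤ h)
    (hf : ∀ i, 0 ≤ f i) (r s : ℝ) :
    PairSummable fun p q => momTerm h r f p * momTerm h s f q := by
  have hnonneg (t : ℝ) (i : ℕ) : 0 ≤ momTerm h t f (i + 1) := mul_nonneg (hf _) (by positivity)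
  exact (hmom.summable_momTerm r).mul_of_nonneg (hmom.summable_momTerm s) (hnonneg r) (hnonneg s)

lemma HasFiniteMoments.pairSum_momTerm_mul (hmom : HasFiniteMoments h f) (hh : 0 ≤ h)
    (hf : ∀ i, 0 ≤ f i) (r s : ℝ) :
    (pairSum fun p q => momTerm h r f p * momTerm h s f q) = mom h r f * mom h s f := by
  rw [mom_eq_tsum_momTerm, mom_eq_tsum_momTerm, (hmom.summable_momTerm r).tsum_mul_tsum
    (hmom.summable_momTerm s) (hmom.pairSummable_momTerm_mul hh hf r s), pairSum]

lemma HasFiniteMoments.pairSummable_pairRate_mul_pow (hmom : HasFiniteMoments h f) (hh : 0 < h)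
    (hβ : 0 ≤ β) (hf : ∀ i, 0 ≤ f i) (k : ℕ) :
    PairSummable fun p q => pairRate h α β f p q * (((p + q : ℕ) : ℝ) * h) ^ k := by
  refine Summable.of_nonneg_of_le
    (fun _ => mul_nonneg (pairRate_nonneg hh.le hf _ _) (by positivity)) (fun _ => ?_)
    (((hmom.pairSummable_momTerm_mul hh.le hf (α + (β + k)) α).add
      (hmom.pairSummable_momTerm_mul hh.le hf α (α + (β + k)))).mul_left (2 ^ (β + k)))
  exact pairRate_mul_pow_le hh hβ hf k (Nat.succ_pos _) (Nat.succ_pos _)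

lemma HasFiniteMoments.pairSummable_splitRate_mul_pow (hmom : HasFiniteMoments h f)
    (hh : 0 < h) (hα : 0 ≤ α) (hf : ∀ i, 0 ≤ f i) (k : ℕ) :
    PairSummable fun a b => splitRate h α β f a b * (((a + b : ℕ) : ℝ) * h) ^ k := by
  have hinj : Function.Injective fun z : ℕ × ℕ => (z.1, z.1 + 1 + z.2) := fun p q hpq => by
    simp only [Prod.mk.injEq] at hpq
    exact Prod.ext hpq.1 (by omega)
  refine Summable.of_nonneg_of_le
    (fun _ => mul_nonneg (splitRate_nonneg hh.le hf _ _) (by positivity)) (fun _ => ?_)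
    ((hmom.pairSummable_momTerm_mul hh.le hf α (α + β + k)).comp_injective hinj)
  exact splitRate_mul_pow_le hh hα hf k (Nat.succ_pos _) (Nat.succ_pos _)

end Moments

section Bounds

variable {h α β : ℝ} {f : ℕ → ℝ}

theorem HasFiniteMoments.pairSum_pairRate_mul_le (hmom : HasFiniteMoments h f) (hh : 0 < h)
    (hβ : 0 ≤ β) (hf : ∀ i, 0 ≤ f i) {k : ℕ} (hk : 1 ≤ k) :
    (pairSum fun p q => pairRate h α β f p q *
        ((((p + q : ℕ) : ℝ) * h) ^ k - ((p : ℝ) * h) ^ k - ((q : ℝ) * h) ^ k)) ≤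
      2 ^ (β + 1) * ∑ l ∈ Ico 1 k,
        (k.choose l : ℝ) * mom h (α + l) f * mom h (α + β + ((k : ℝ) - l)) f := by
  have hprod := hmom.pairSummable_momTerm_mul hh.le hf
  have hterm (l : ℕ) : PairSummable fun p q => (k.choose l : ℝ) *
      (momTerm h (α + β + l) f p * momTerm h (α + ((k : ℝ) - l)) f q
        + momTerm h (α + l) f p * momTerm h (α + β + ((k : ℝ) - l)) f q) :=
    ((hprod _ _).add (hprod _ _)).mul_left _
  have hle (z : ℕ × ℕ) := pairRate_mul_add_pow_sub_le (α := α) (p := z.1 + 1) (q := z.2 + 1)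
    hh hβ hf hk (by omega) (by omega)
  have hnonneg (z : ℕ × ℕ) : 0 ≤ pairRate h α β f (z.1 + 1) (z.2 + 1) *
      ((((z.1 + 1 + (z.2 + 1) : ℕ) : ℝ) * h) ^ k - (((z.1 + 1 : ℕ) : ℝ) * h) ^ k
        - (((z.2 + 1 : ℕ) : ℝ) * h) ^ k) :=
    mul_nonneg (pairRate_nonneg hh.le hf _ _) (by
      linarith [pow_add_pow_le_pow_natCast_add hh.le (by omega : k ≠ 0) (z.1 + 1) (z.2 + 1)])
  have hEsum := (summable_sum (s := Ico 1 k) fun l _ => hterm l).mul_left (2 ^ β)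
  calc _ ≤ _ := (hEsum.of_nonneg_of_le hnonneg hle).tsum_le_tsum hle hEsum
    _ = 2 ^ β * ∑ l ∈ Ico 1 k, (k.choose l : ℝ) *
          (mom h (α + β + l) f * mom h (α + ((k : ℝ) - l)) f
            + mom h (α + l) f * mom h (α + β + ((k : ℝ) - l)) f) := by
        rw [tsum_mul_left, Summable.tsum_finsetSum fun l _ => hterm l]
        refine congrArg _ (sum_congr rfl fun l _ => ?_)
        rw [tsum_mul_left, (hprod _ _).tsum_add (hprod _ _)]
        exact congrArg _ (congrArg₂ (· + ·) (hmom.pairSum_momTerm_mul hh.le hf _ _)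
          (hmom.pairSum_momTerm_mul hh.le hf _ _))
    _ = _ := by
        have hrefl := sum_Ico_choose_mul_reflect k fun x y =>
          mom h (α + β + x) f * mom h (α + y) f
        simp_rw [mul_add (k.choose _ : ℝ), sum_add_distrib, hrefl, ← sum_add_distrib,
          Real.rpow_add_one two_ne_zero, mul_assoc, mul_sum]
        exact sum_congr rfl fun l _ => by ring

theorem pairSum_splitRate_mul_nonpos (hh : 0 ≤ h) (hf : ∀ i, 0 ≤ f i) {k : ℕ} (hk : k ≠ 0) :
    (pairSum fun a b => splitRate h α β f a b *
        (((a : ℝ) * h) ^ k + ((b : ℝ) * h) ^ k - (((a + b : ℕ) : ℝ) * h) ^ k)) ≤ 0 :=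
  tsum_nonpos fun _ => mul_nonpos_of_nonneg_of_nonpos (splitRate_nonneg hh hf _ _)
    (sub_nonpos.mpr (pow_add_pow_le_pow_natCast_add hh hk _ _))

theorem HasFiniteMoments.hasSum_Sop1_mul_pow (hmom : HasFiniteMoments h f) (hh : 0 < h)
    (hβ : 0 ≤ β) (hf : ∀ i, 0 ≤ f i) (k : ℕ) :
    HasSum (fun i => Sop1 h α β f (i + 1) * (((i + 1 : ℕ) : ℝ) * h) ^ k)
      (pairSum fun p q => pairRate h α β f p q *
        ((((p + q : ℕ) : ℝ) * h) ^ k - ((p : ℝ) * h) ^ k - ((q : ℝ) * h) ^ k)) := by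
  have hgain := hmom.pairSummable_pairRate_mul_pow (α := α) hh hβ hf k
  exact hasSum_Sop1_mul (φ := fun n : ℕ => ((n : ℝ) * h) ^ k) hgain
    (hgain.mul_of_le (fun _ _ => pairRate_nonneg hh.le hf _ _) (fun _ _ => by positivity)
      (fun _ _ => pow_le_pow_natCast_add hh.le k _ _))

theorem HasFiniteMoments.hasSum_Sop23_mul_pow (hmom : HasFiniteMoments h f) (hh : 0 < h)
    (hα : 0 ≤ α) (hf : ∀ i, 0 ≤ f i) (k : ℕ) :
    HasSum (fun i => Sop23 h α β f (i + 1) * (((i + 1 : ℕ) : ℝ) * h) ^ k)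
      (pairSum fun a b => splitRate h α β f a b *
        (((a : ℝ) * h) ^ k + ((b : ℝ) * h) ^ k - (((a + b : ℕ) : ℝ) * h) ^ k)) := by
  have hgain := hmom.pairSummable_splitRate_mul_pow (β := β) hh hα hf k
  have hw (a b : ℕ) := splitRate_nonneg (α := α) (β := β) hh.le hf a b
  exact hasSum_Sop23_mul (φ := fun n : ℕ => ((n : ℝ) * h) ^ k) hgain
    (hgain.mul_of_le hw (fun _ _ => by positivity)
      (fun _ _ => pow_le_pow_natCast_add hh.le k _ _))
    (hgain.mul_of_le hw (fun _ _ => by positivity)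
      (fun a b => add_comm b a ▸ pow_le_pow_natCast_add hh.le k b a))

end Bounds

theorem stmt_13_general (h α1 β1 α2 β2 α3 β3 : ℝ) (k : ℕ) (f : ℕ → ℝ)
    (hh : 0 < h) (hβ1 : 0 ≤ β1) (hα2 : 0 ≤ α2)
    (hα3 : 0 ≤ α3) (hf : ∀ i, 0 ≤ f i) (hk : 1 ≤ k)
    (hmom : ∀ r : ℝ, Summable (fun i : ℕ => f (i + 1) * (((i : ℝ) + 1) * h) ^ r)) :
    mom h k (Sfull h α1 β1 α2 β2 α3 β3 f) ≤
      (2 : ℝ) ^ (β1 + 1) * ∑ l ∈ Finset.Ico 1 k,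
        (k.choose l : ℝ) * mom h (α1 + l) f * mom h (α1 + β1 + ((k : ℝ) - l)) f := by
  have hmom : HasFiniteMoments h f := hmom
  have hk0 : k ≠ 0 := by omega
  have hS := ((hmom.hasSum_Sop1_mul_pow (α := α1) hh hβ1 hf k).add
    (hmom.hasSum_Sop23_mul_pow (β := β2) hh hα2 hf k)).add
    (hmom.hasSum_Sop23_mul_pow (β := β3) hh hα3 hf k)
  rw [mom_eq_tsum_momTerm]
  simp only [momTerm, Real.rpow_natCast, Sfull, add_mul]
  rw [hS.tsum_eq]
  linarith [hmom.pairSum_pairRate_mul_le (α := α1) hh hβ1 hf hk,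
    pairSum_splitRate_mul_nonpos (α := α2) (β := β2) hh.le hf hk0,
    pairSum_splitRate_mul_nonpos (α := α3) (β := β3) hh.le hf hk0]

/-- Combinatorial moment estimate: for `f ≥ 0` with all moments finite and an
integer `k ≥ 1`,
`m_k⟨S[f]⟩ ≤ 2^{β1+1} ∑_{l=1}^{k-1} C(k,l) m_{α1+l}⟨f⟩ m_{α1+β1+k-l}⟨f⟩`. -/
theorem stmt_13 (h α1 β1 α2 β2 α3 β3 : ℝ) (k : ℕ) (f : ℕ → ℝ)
    (hh : 0 < h) (hα1 : 0 ≤ α1) (hβ1 : 0 ≤ β1) (hα2 : 0 ≤ α2) (hβ2 : 0 ≤ β2)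
    (hα3 : 0 ≤ α3) (hβ3 : 0 ≤ β3) (hf : ∀ i, 0 ≤ f i) (hk : 1 ≤ k)
    (hmom : ∀ r : ℝ, Summable (fun i : ℕ => f (i + 1) * (((i : ℝ) + 1) * h) ^ r)) :
    mom h k (Sfull h α1 β1 α2 β2 α3 β3 f) ≤
      (2 : ℝ) ^ (β1 + 1) * ∑ l ∈ Finset.Ico 1 k,
        (k.choose l : ℝ) * mom h (α1 + l) f * mom h (α1 + β1 + ((k : ℝ) - l)) f :=
  stmt_13_general h α1 β1 α2 β2 α3 β3 k f hh hβ1 hα2 hα3 hf hk hmom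
end

section
/- Shifted Mittag–Leffler moment lower bound: let f : ℕ → ℝ≥0, h > 0, a ≥ 1, δ > 1 and 0 < λ. Then ℰ^∞_{a,δ}(λ)⟨f⟩ ≥ λ^{−δa} · ℰ^∞_a(λ)⟨f⟩ − λ^{−(δ−1)a} · m_1⟨f⟩ · ℰ_a(1), provided all quantities are finite. -/
/-- The shifted Mittag–Leffler moment
`ℰ^∞_{a,ρ}(λ)⟨f⟩ = ∑_{k≥1} m_{k+ρ}⟨f⟩ λ^{ak}/Γ(ak+1)`. -/
noncomputable def mlMomTerm (h a ρ lam : ℝ) (f : ℕ → ℝ) (k : ℕ) : ℝ :=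
  mom h (((k : ℝ) + 1) + ρ) f * lam ^ (a * ((k : ℝ) + 1)) / Real.Gamma (a * ((k : ℝ) + 1) + 1)

noncomputable def mlMom (h a ρ lam : ℝ) (f : ℕ → ℝ) : ℝ :=
  ∑' k : ℕ, mlMomTerm h a ρ lam f k

/-- `ℰ_a(1) = ∑_{k≥1} 1/Γ(ak+1)`. -/
noncomputable def mlEone (a : ℝ) : ℝ := ∑' k : ℕ, 1 / Real.Gamma (a * ((k : ℝ) + 1) + 1)

/-!
Fix `k` and write `t = λ^{-a}`. For every grid point `x = ih`, either `x ≥ t`, and then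
`t^δ x^{k+1} ≤ x^{k+1+δ}`, or `x < t`, and then `x^{k+1} ≤ t^k x`. In both cases
`t^δ (x^{k+1} - t^k x) ≤ x^{k+1+δ}`; summing against `f` and then against the weights
`λ^{a(k+1)}/Γ(a(k+1)+1)` gives the bound, since `t^δ t^k λ^{a(k+1)} = λ^{-(δ-1)a}`.
-/

open Real

lemma rpow_mul_sub_le_rpow_add {t x δ k : ℝ} (ht : 0 ≤ t) (hx : 0 ≤ x) (hδ : 0 ≤ δ)
    (hk : 0 ≤ k) : t ^ δ * (x ^ (k + 1) - t ^ k * x) ≤ x ^ (k + 1 + δ) := by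
  rcases le_or_gt t x with htx | hxt
  · calc t ^ δ * (x ^ (k + 1) - t ^ k * x)
        ≤ t ^ δ * x ^ (k + 1) := by
          gcongr
          exact sub_le_self _ (by positivity)
      _ ≤ x ^ δ * x ^ (k + 1) := by gcongr
      _ = x ^ (k + 1 + δ) := by rw [rpow_add' hx (y := k + 1) (by linarith), mul_comm]
  · have hsmall : x ^ (k + 1) ≤ t ^ k * x := by
      rw [rpow_add' hx (by linarith), rpow_one]
      gcongr
    calc t ^ δ * (x ^ (k + 1) - t ^ k * x)
        ≤ 0 := mul_nonpos_of_nonneg_of_nonpos (by positivity) (by linarith)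
      _ ≤ x ^ (k + 1 + δ) := by positivity

lemma rpow_mul_mom_sub_le_mom {h t δ k : ℝ} {f : ℕ → ℝ} (hh : 0 ≤ h) (hf : ∀ i, 0 ≤ f i)
    (ht : 0 ≤ t) (hδ : 0 ≤ δ) (hk : 0 ≤ k)
    (hmom : ∀ r : ℝ, Summable (fun i : ℕ => f (i + 1) * (((i : ℝ) + 1) * h) ^ r)) :
    t ^ δ * (mom h (k + 1) f - t ^ k * mom h 1 f) ≤ mom h (k + 1 + δ) f := by
  refine hasSum_le (fun i => ?_)
    (((hmom _).hasSum.sub ((hmom 1).hasSum.mul_left (t ^ k))).mul_left (t ^ δ))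
    (hmom _).hasSum
  have hx : 0 ≤ ((i : ℝ) + 1) * h := by positivity
  calc t ^ δ * (f (i + 1) * (((i : ℝ) + 1) * h) ^ (k + 1)
          - t ^ k * (f (i + 1) * (((i : ℝ) + 1) * h) ^ (1 : ℝ)))
      = f (i + 1) * (t ^ δ * ((((i : ℝ) + 1) * h) ^ (k + 1)
          - t ^ k * (((i : ℝ) + 1) * h))) := by rw [rpow_one]; ring
    _ ≤ f (i + 1) * (((i : ℝ) + 1) * h) ^ (k + 1 + δ) :=
      mul_le_mul_of_nonneg_left (rpow_mul_sub_le_rpow_add ht hx hδ hk) (hf _)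

lemma Gamma_mul_add_one_pos {a : ℝ} (ha : 0 ≤ a) (k : ℕ) :
    0 < Gamma (a * ((k : ℝ) + 1) + 1) :=
  Gamma_pos_of_pos (by positivity)

lemma factorial_succ_le_Gamma_mul_add_one {a : ℝ} (ha : 1 ≤ a) (k : ℕ) :
    ((k + 1).factorial : ℝ) ≤ Gamma (a * ((k : ℝ) + 1) + 1) := by
  have hk : (0 : ℝ) ≤ k := k.cast_nonneg
  rw [← Gamma_nat_eq_factorial, Nat.cast_succ]
  exact Gamma_strictMonoOn_Ici.monotoneOn (Set.mem_Ici.2 (by linarith))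
    (Set.mem_Ici.2 (by nlinarith)) (by nlinarith)

lemma summable_one_div_Gamma_mul_add_one {a : ℝ} (ha : 1 ≤ a) :
    Summable (fun k : ℕ => 1 / Gamma (a * ((k : ℝ) + 1) + 1)) := by
  have hfac : Summable (fun k : ℕ => 1 / ((k + 1).factorial : ℝ)) := by
    simpa only [one_pow, Function.comp_def] using
      (Real.summable_pow_div_factorial 1).comp_injective (add_left_injective 1)
  refine hfac.of_nonneg_of_le (fun k => ?_) (fun k => ?_)
  · exact (one_div_pos.2 (Gamma_mul_add_one_pos (by linarith) k)).le
  · exact one_div_le_one_div_of_le (by positivity) (factorial_succ_le_Gamma_mul_add_one ha k)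

lemma rpow_mul_mlMomTerm_sub_le_mlMomTerm {h a δ lam : ℝ} {f : ℕ → ℝ} (hh : 0 ≤ h)
    (hf : ∀ i, 0 ≤ f i) (ha : 0 ≤ a) (hδ : 0 ≤ δ) (hlam : 0 < lam)
    (hmom : ∀ r : ℝ, Summable (fun i : ℕ => f (i + 1) * (((i : ℝ) + 1) * h) ^ r)) (k : ℕ) :
    lam ^ (-δ * a) * mlMomTerm h a 0 lam f k
        - lam ^ (-(δ - 1) * a) * mom h 1 f * (1 / Gamma (a * ((k : ℝ) + 1) + 1)) ≤
      mlMomTerm h a δ lam f k := by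
  set t := lam ^ (-a)
  set w := lam ^ (a * ((k : ℝ) + 1)) / Gamma (a * ((k : ℝ) + 1) + 1)
  have hw : 0 ≤ w := div_nonneg (by positivity) (Gamma_mul_add_one_pos ha k).le
  have htδ : t ^ δ = lam ^ (-δ * a) := by rw [← rpow_mul hlam.le]; ring_nf
  have hweight : t ^ δ * t ^ (k : ℝ) * lam ^ (a * ((k : ℝ) + 1)) = lam ^ (-(δ - 1) * a) := by
    rw [← rpow_mul hlam.le, ← rpow_mul hlam.le, ← rpow_add hlam, ← rpow_add hlam]; ring_nf
  calc lam ^ (-δ * a) * mlMomTerm h a 0 lam f k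
        - lam ^ (-(δ - 1) * a) * mom h 1 f * (1 / Gamma (a * ((k : ℝ) + 1) + 1))
      = t ^ δ * (mom h ((k : ℝ) + 1) f - t ^ (k : ℝ) * mom h 1 f) * w := by
        rw [mlMomTerm, add_zero, ← hweight, ← htδ]; ring
    _ ≤ mom h ((k : ℝ) + 1 + δ) f * w :=
        mul_le_mul_of_nonneg_right
          (rpow_mul_mom_sub_le_mom hh hf (by positivity) hδ k.cast_nonneg hmom) hw
    _ = mlMomTerm h a δ lam f k := by rw [mlMomTerm]; ring

/-- Shifted Mittag–Leffler moment lower bound: for `a ≥ 1`, `δ > 1`, `λ > 0`,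
`ℰ^∞_{a,δ}(λ)⟨f⟩ ≥ λ^{-δa} ℰ^∞_a(λ)⟨f⟩ - λ^{-(δ-1)a} m_1⟨f⟩ ℰ_a(1)`,
provided all the quantities involved are finite. -/
theorem stmt_16 (h a δ lam : ℝ) (f : ℕ → ℝ) (hh : 0 < h) (hf : ∀ i, 0 ≤ f i)
    (ha : 1 ≤ a) (hδ : 1 < δ) (hlam : 0 < lam)
    (hmom : ∀ r : ℝ, Summable (fun i : ℕ => f (i + 1) * (((i : ℝ) + 1) * h) ^ r))
    (hs0 : Summable (mlMomTerm h a 0 lam f))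
    (hsδ : Summable (mlMomTerm h a δ lam f)) :
    lam ^ (-δ * a) * mlMom h a 0 lam f - lam ^ (-(δ - 1) * a) * mom h 1 f * mlEone a ≤
      mlMom h a δ lam f :=
  hasSum_le
    (rpow_mul_mlMomTerm_sub_le_mlMomTerm hh.le hf (by linarith) (by linarith) hlam hmom)
    ((hs0.hasSum.mul_left _).sub ((summable_one_div_Gamma_mul_add_one ha).hasSum.mul_left _))
    hsδ.hasSum
end

section
/- Supersolution comparison for the moment ODE: let A, B, p > 0 with p > 1, and suppose y : [0,∞) → ℝ≥0 is differentiable with y'(t) ≤ A − B·y(t)^p for all t ≥ 0. Then for all t > 0, y(t) ≤ y(0)/(1 + B(p−1) y(0)^{p−1} t)^{1/(p−1)} + (A/B)^{1/p}. -/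
/-!
The function `z(t) = y(0) (1 + B (p-1) y(0)^(p-1) t)^(-1/(p-1))` solves the Bernoulli equation
`z' = -B z^p` with `z(0) = y(0)`. By superadditivity of `x ↦ x^p`, adding the equilibrium level
`(A/B)^(1/p)` turns it into a supersolution `Y` of `Y' ≥ A - B Y^p`. Since the right-hand side
is strictly decreasing in the unknown, `y` can never cross `Y + ε` from below, and `ε → 0` gives
`y ≤ Y`.
-/

open Real Set

theorem le_supersolution_of_subsolution {F y y' Y Y' : ℝ → ℝ} {a : ℝ}
    (hF : StrictAntiOn F (Ici 0))
    (hy : ∀ t, a ≤ t → HasDerivAt y (y' t) t) (hY : ∀ t, a ≤ t → HasDerivAt Y (Y' t) t)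
    (hsub : ∀ t, a ≤ t → y' t ≤ F (y t)) (hsuper : ∀ t, a ≤ t → F (Y t) ≤ Y' t)
    (hY_nonneg : ∀ t, a ≤ t → 0 ≤ Y t) (ha : y a ≤ Y a) {t : ℝ} (ht : a ≤ t) : y t ≤ Y t := by
  refine le_of_forall_pos_le_add fun ε hε => ?_
  refine image_le_of_deriv_right_lt_deriv_boundary' (f := y) (B := fun s => Y s + ε) (B' := Y')
    (fun s hs => (hy s hs.1).continuousAt.continuousWithinAt)
    (fun s hs => (hy s hs.1).hasDerivWithinAt) (by linarith)
    (fun s hs => (hY s hs.1).continuousAt.continuousWithinAt.add continuousWithinAt_const)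
    (fun s hs => ((hY s hs.1).add_const ε).hasDerivWithinAt) (fun s hs hys => ?_) ⟨ht, le_rfl⟩
  have hYs := hY_nonneg s hs.1
  calc y' s ≤ F (y s) := hsub s hs.1
    _ < F (Y s) := hF hYs (by simp only [mem_Ici, hys]; linarith) (by rw [hys]; linarith)
    _ ≤ Y' s := hsuper s hs.1

noncomputable def bernoulliDecay (B p y₀ t : ℝ) : ℝ :=
  y₀ / (1 + B * (p - 1) * y₀ ^ (p - 1) * t) ^ (1 / (p - 1))

theorem hasDerivAt_bernoulliDecay {B p y₀ t : ℝ} (hp₀ : p ≠ 0) (hp₁ : p ≠ 1) (hy₀ : 0 ≤ y₀)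
    (ht : 0 < 1 + B * (p - 1) * y₀ ^ (p - 1) * t) :
    HasDerivAt (bernoulliDecay B p y₀) (-B * bernoulliDecay B p y₀ t ^ p) t := by
  set c := B * (p - 1) * y₀ ^ (p - 1)
  set q := 1 / (p - 1)
  set u := 1 + c * t
  have hp₁' : p - 1 ≠ 0 := sub_ne_zero.2 hp₁
  have hw : 0 < u ^ q := rpow_pos_of_pos ht q
  have hu : HasDerivAt (fun s => 1 + c * s) c t := by
    simpa using ((hasDerivAt_id t).const_mul c).const_add 1
  have hfun : bernoulliDecay B p y₀ = fun s => y₀ * ((1 + c * s) ^ q)⁻¹ := by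
    funext s
    simp only [bernoulliDecay, div_eq_mul_inv, c, q]
  rw [show bernoulliDecay B p y₀ t = y₀ / u ^ q from rfl, hfun]
  refine (((hu.rpow_const (p := q) (Or.inl ht.ne')).inv hw.ne').const_mul y₀).congr_deriv ?_
  have hy₀p : y₀ ^ p = y₀ * y₀ ^ (p - 1) := by
    simpa using rpow_add' hy₀ (show 1 + (p - 1) ≠ 0 by simpa using hp₀)
  have hcq : c * q = B * y₀ ^ (p - 1) := by
    simp only [c, q]; field_simp
  have hwp : (u ^ q) ^ p = u ^ q * u := by
    rw [← rpow_mul ht.le, ← rpow_add_one ht.ne']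
    congr 1
    simp only [q]; field_simp; ring
  change y₀ * (-(c * q * u ^ (q - 1)) / (u ^ q) ^ 2) = -B * (y₀ / u ^ q) ^ p
  rw [div_rpow hy₀ hw.le, hwp, rpow_sub_one ht.ne', hy₀p]
  field_simp
  linear_combination -y₀ * hcq

theorem sub_mul_rpow_add_le_neg_mul_rpow {A B p z : ℝ} (hA : 0 ≤ A) (hB : 0 < B) (hp : 1 ≤ p)
    (hz : 0 ≤ z) : A - B * (z + (A / B) ^ (1 / p)) ^ p ≤ -B * z ^ p := by
  have hAB : 0 ≤ A / B := div_nonneg hA hB.le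
  have hpow : ((A / B) ^ (1 / p)) ^ p = A / B := by
    rw [← rpow_mul hAB, one_div_mul_cancel (by positivity), rpow_one]
  have hsuper := add_rpow_le_rpow_add hz (rpow_nonneg hAB (1 / p)) hp
  rw [hpow] at hsuper
  have := mul_le_mul_of_nonneg_left hsuper hB.le
  rw [mul_add, mul_div_cancel₀ A hB.ne'] at this
  linarith

/-- Supersolution comparison for the moment ODE: if `A, B > 0`, `p > 1`, and
`y ≥ 0` is differentiable with `y'(t) ≤ A - B y(t)^p` on `[0,∞)`, then for all `t > 0`,
`y(t) ≤ y(0)/(1 + B(p-1) y(0)^{p-1} t)^{1/(p-1)} + (A/B)^{1/p}`. -/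
theorem stmt_19 (A B p : ℝ) (hA : 0 < A) (hB : 0 < B) (hp : 1 < p)
    (y y' : ℝ → ℝ) (hy0 : ∀ t, 0 ≤ t → 0 ≤ y t)
    (hyd : ∀ t, 0 ≤ t → HasDerivAt y (y' t) t)
    (hineq : ∀ t, 0 ≤ t → y' t ≤ A - B * y t ^ p) :
    ∀ t, 0 < t →
      y t ≤ y 0 / (1 + B * (p - 1) * y 0 ^ (p - 1) * t) ^ (1 / (p - 1)) + (A / B) ^ (1 / p) := by
  intro t ht
  have hp₀ : 0 < p := one_pos.trans hp
  have hy₀ : 0 ≤ y 0 := hy0 0 le_rfl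
  have hbase : ∀ s, 0 ≤ s → 0 < 1 + B * (p - 1) * y 0 ^ (p - 1) * s := fun s hs =>
    add_pos_of_pos_of_nonneg one_pos
      (mul_nonneg (mul_nonneg (mul_nonneg hB.le (sub_pos.2 hp).le) (rpow_nonneg hy₀ _)) hs)
  have hdecay_nonneg : ∀ s, 0 ≤ s → 0 ≤ bernoulliDecay B p (y 0) s := fun s hs =>
    div_nonneg hy₀ (rpow_nonneg (hbase s hs).le _)
  have hlevel : 0 ≤ (A / B) ^ (1 / p) := rpow_nonneg (div_nonneg hA.le hB.le) _
  have hF : StrictAntiOn (fun x => A - B * x ^ p) (Ici 0) := fun x hx z _ hxz =>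
    sub_lt_sub_left (mul_lt_mul_of_pos_left (rpow_lt_rpow hx hxz hp₀) hB) A
  exact le_supersolution_of_subsolution
    (Y := fun s => bernoulliDecay B p (y 0) s + (A / B) ^ (1 / p)) hF hyd
    (fun s hs => (hasDerivAt_bernoulliDecay hp₀.ne' hp.ne' hy₀ (hbase s hs)).add_const _) hineq
    (fun s hs => sub_mul_rpow_add_le_neg_mul_rpow hA.le hB hp.le (hdecay_nonneg s hs))
    (fun s hs => add_nonneg (hdecay_nonneg s hs) hlevel)
    (by simpa [bernoulliDecay] using hlevel) ht.le
end
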